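/- (Positive correlation) Assume Q1 and A1-i. For every x ∈ Δ^𝒜, every π ∈ ℝ^𝒜, and every Δx ∈ V(x)[π], one has Δx · π ≥ 0. Moreover, if every a ∈ 𝒜 with x_a > 0 satisfies π_a = max_{b∈𝒜} π_b, then Δx · π = 0 for every Δx ∈ V(x)[π]; and if some a with x_a > 0 has π_a < max_{b∈𝒜} π_b, then Δx · π > 0 for every Δx ∈ V(x)[π]. -/

import Mathlib

/-!
Expanding the definitions, `Δx · π = ∑ₐ xₐ ∑_{A'} ℙ_{𝒜a}(A') ρₐ(A') (π_*(A') - πₐ)`, because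
`yₐ(A')` is supported on the optimal actions of `A'`. By Q1 a revision rate vanishes when the gain
`π_*(A') - πₐ` is negative, so every term is nonnegative, and nonpositive when `a` is optimal.
If a used action `a` is suboptimal, A1-i gives positive probability to a revision set containing a
globally optimal action; there the gain is positive and the revision rate, being at least `Q₋` of a
positive number, is positive as well.
-/

open MeasureTheory Finset
open scoped Classical

/-- The maximal payoff among actions in `S`. -/
noncomputable def piStar {A : Type*} (π : A → ℝ) (S : Finset A) : ℝ :=
  if h : S.Nonempty then S.sup' h π else 0

/-- The set of optimal actions in `S`: `b_*[π](S)`. -/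
noncomputable def bStar {A : Type*} (π : A → ℝ) (S : Finset A) : Finset A :=
  S.filter (fun b => π b = piStar π S)

/-- `Q(q) = μ_Q((-∞, q])`. -/
noncomputable def Qfun (μQ : Measure ℝ) (q : ℝ) : ℝ := (μQ (Set.Iic q)).toReal

/-- `Q₋(q) = μ_Q((-∞, q))`. -/
noncomputable def Qminus (μQ : Measure ℝ) (q : ℝ) : ℝ := (μQ (Set.Iio q)).toReal

/-- `z` is an admissible transition vector for `a` at `π`. -/
def IsAdmissible {A : Type*} [Fintype A] [DecidableEq A]
    (P : A → Finset A → ℝ) (μQ : Measure ℝ) (π : A → ℝ) (a : A) (z : A → ℝ) : Prop :=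
  ∃ (y : Finset A → A → ℝ) (ρ : Finset A → ℝ),
    (∀ A' ∈ (Finset.univ.erase a).powerset, A'.Nonempty →
      y A' ∈ stdSimplex ℝ A ∧ (∀ b, y A' b ≠ 0 → b ∈ bStar π A') ∧
      ρ A' ∈ Set.Icc (Qminus μQ (piStar π A' - π a)) (Qfun μQ (piStar π A' - π a))) ∧
    z = fun b => ∑ A' ∈ (Finset.univ.erase a).powerset,
      P a A' * ρ A' * (y A' b - (if b = a then (1 : ℝ) else 0))

/-- The evolutionary dynamic: the set `V(x)[π]` of feasible transition vectors. -/
def Vset {A : Type*} [Fintype A] [DecidableEq A]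
    (P : A → Finset A → ℝ) (μQ : Measure ℝ) (x π : A → ℝ) : Set (A → ℝ) :=
  {Δx | ∃ z : A → A → ℝ, (∀ a, IsAdmissible P μQ π a (z a)) ∧
    Δx = fun b => ∑ a : A, x a * z a b}

lemma Qminus_nonneg (μ : Measure ℝ) (q : ℝ) : 0 ≤ Qminus μ q := ENNReal.toReal_nonneg

lemma Qminus_pos {μ : Measure ℝ} [IsFiniteMeasure μ] (hQ : ∀ q : ℝ, 0 < q → 0 < Qfun μ q)
    {q : ℝ} (hq : 0 < q) : 0 < Qminus μ q :=
  (hQ (q / 2) (half_pos hq)).trans_le <| ENNReal.toReal_mono (measure_ne_top _ _)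
    (measure_mono (Set.Iic_subset_Iio.mpr (half_lt_self hq)))

lemma mul_nonneg_of_mem_Icc_Qminus_Qfun {μ : Measure ℝ} (hQ : ∀ q : ℝ, q < 0 → Qfun μ q = 0)
    {ρ d : ℝ} (hρ : ρ ∈ Set.Icc (Qminus μ d) (Qfun μ d)) : 0 ≤ ρ * d := by
  have hρ₀ : 0 ≤ ρ := (Qminus_nonneg μ d).trans hρ.1
  rcases le_or_gt 0 d with hd | hd
  · exact mul_nonneg hρ₀ hd
  · rw [le_antisymm (hρ.2.trans_eq (hQ d hd)) hρ₀, zero_mul]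

section Payoffs

variable {A : Type*}

lemma le_piStar (π : A → ℝ) {S : Finset A} {b : A} (hb : b ∈ S) : π b ≤ piStar π S := by
  rw [piStar, dif_pos ⟨b, hb⟩]
  exact le_sup' π hb

lemma piStar_le_sup' [Fintype A] [Nonempty A] (π : A → ℝ) {S : Finset A} (hS : S.Nonempty) :
    piStar π S ≤ univ.sup' univ_nonempty π := by
  rw [piStar, dif_pos hS]
  exact sup'_mono π (subset_univ S) hS

lemma sum_mul_eq_piStar [Fintype A] {π y : A → ℝ} {S : Finset A} (hy : y ∈ stdSimplex ℝ A)
    (hsupp : ∀ b, y b ≠ 0 → b ∈ bStar π S) : ∑ b, y b * π b = piStar π S := by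
  calc ∑ b, y b * π b = ∑ b, y b * piStar π S := by
        refine sum_congr rfl fun b _ => ?_
        by_cases hb : y b = 0
        · rw [hb, zero_mul, zero_mul]
        · rw [(mem_filter.mp (hsupp b hb)).2]
    _ = piStar π S := by rw [← sum_mul, hy.2, one_mul]

end Payoffs

section Admissible

variable {A : Type*} [Fintype A] [DecidableEq A]

lemma sum_revision_mul (s : Finset (Finset A)) (c : Finset A → ℝ) (y : Finset A → A → ℝ)
    (a : A) (π : A → ℝ) :
    ∑ b, (∑ A' ∈ s, c A' * (y A' b - if b = a then 1 else 0)) * π b =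
      ∑ A' ∈ s, c A' * (∑ b, y A' b * π b - π a) := by
  simp only [sum_mul]
  rw [sum_comm]
  refine sum_congr rfl fun A' _ => ?_
  simp only [mul_assoc, ← mul_sum, sub_mul, sum_sub_distrib, ite_mul, one_mul, zero_mul,
    sum_ite_eq', mem_univ, if_true]

variable {P : A → Finset A → ℝ} {μ : Measure ℝ} {π : A → ℝ} {a : A} {z : A → ℝ}

lemma IsAdmissible.exists_sum_mul_eq (hPempty : P a ∅ = 0) (hz : IsAdmissible P μ π a z) :
    ∃ ρ : Finset A → ℝ,
      (∀ A' ∈ {A' ∈ (univ.erase a).powerset | A'.Nonempty},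
        ρ A' ∈ Set.Icc (Qminus μ (piStar π A' - π a)) (Qfun μ (piStar π A' - π a))) ∧
      ∑ b, z b * π b = ∑ A' ∈ {A' ∈ (univ.erase a).powerset | A'.Nonempty},
        P a A' * ρ A' * (piStar π A' - π a) := by
  obtain ⟨y, ρ, hyρ, rfl⟩ := hz
  refine ⟨ρ, fun A' hA' => (hyρ A' (mem_filter.mp hA').1 (mem_filter.mp hA').2).2.2, ?_⟩
  rw [sum_revision_mul, sum_filter]
  refine sum_congr rfl fun A' hA' => ?_
  rcases A'.eq_empty_or_nonempty with rfl | hne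
  · simp [hPempty]
  · obtain ⟨hy, hsupp, -⟩ := hyρ A' hA' hne
    rw [if_pos hne, sum_mul_eq_piStar hy hsupp]

lemma IsAdmissible.sum_mul_nonneg (hPnn : ∀ A', 0 ≤ P a A') (hPempty : P a ∅ = 0)
    (hQ : ∀ q : ℝ, q < 0 → Qfun μ q = 0) (hz : IsAdmissible P μ π a z) :
    0 ≤ ∑ b, z b * π b := by
  obtain ⟨ρ, hρ, hsum⟩ := hz.exists_sum_mul_eq hPempty
  rw [hsum]
  refine sum_nonneg fun A' hA' => ?_
  rw [mul_assoc]
  exact mul_nonneg (hPnn A') (mul_nonneg_of_mem_Icc_Qminus_Qfun hQ (hρ A' hA'))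

lemma IsAdmissible.sum_mul_nonpos_of_eq_sup' [Nonempty A] (hPnn : ∀ A', 0 ≤ P a A')
    (hPempty : P a ∅ = 0) (ha : π a = univ.sup' univ_nonempty π) (hz : IsAdmissible P μ π a z) :
    ∑ b, z b * π b ≤ 0 := by
  obtain ⟨ρ, hρ, hsum⟩ := hz.exists_sum_mul_eq hPempty
  rw [hsum]
  refine sum_nonpos fun A' hA' => mul_nonpos_of_nonneg_of_nonpos ?_ ?_
  · exact mul_nonneg (hPnn A') ((Qminus_nonneg μ _).trans (hρ A' hA').1)
  · linarith [piStar_le_sup' π (mem_filter.mp hA').2]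

lemma IsAdmissible.sum_mul_pos_of_lt_sup' [Nonempty A] [IsFiniteMeasure μ]
    (hPnn : ∀ A', 0 ≤ P a A') (hPempty : P a ∅ = 0)
    (hQa : ∀ q : ℝ, q < 0 → Qfun μ q = 0) (hQb : ∀ q : ℝ, 0 < q → 0 < Qfun μ q)
    (hPcover : ∀ b : A, b ≠ a →
      0 < ∑ A' ∈ (univ.erase a).powerset.filter (fun A' => b ∈ A'), P a A')
    (ha : π a < univ.sup' univ_nonempty π) (hz : IsAdmissible P μ π a z) :
    0 < ∑ b, z b * π b := by
  obtain ⟨ρ, hρ, hsum⟩ := hz.exists_sum_mul_eq hPempty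
  obtain ⟨b, -, hb⟩ := exists_mem_eq_sup' univ_nonempty π
  have hba : b ≠ a := by
    rintro rfl
    exact ha.ne hb.symm
  obtain ⟨A', hA', hPA'⟩ := (sum_pos_iff_of_nonneg fun A' _ => hPnn A').mp (hPcover b hba)
  obtain ⟨hA's, hbA'⟩ := mem_filter.mp hA'
  have hmem : A' ∈ {A' ∈ (univ.erase a).powerset | A'.Nonempty} :=
    mem_filter.mpr ⟨hA's, b, hbA'⟩
  have hgain : 0 < piStar π A' - π a := by linarith [le_piStar π hbA']
  rw [hsum]
  refine sum_pos' (fun A'' hA'' => ?_) ⟨A', hmem, ?_⟩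
  · rw [mul_assoc]
    exact mul_nonneg (hPnn A'') (mul_nonneg_of_mem_Icc_Qminus_Qfun hQa (hρ A'' hA''))
  · exact mul_pos (mul_pos hPA' ((Qminus_pos hQb hgain).trans_le (hρ A' hmem).1)) hgain

lemma exists_sum_mul_eq_of_mem_Vset {x Δx : A → ℝ} (hΔx : Δx ∈ Vset P μ x π) :
    ∃ z : A → A → ℝ, (∀ a, IsAdmissible P μ π a (z a)) ∧
      ∑ b, Δx b * π b = ∑ a, x a * ∑ b, z a b * π b := by
  obtain ⟨z, hz, rfl⟩ := hΔx
  refine ⟨z, hz, ?_⟩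
  simp only [sum_mul, mul_sum, mul_assoc]
  exact sum_comm

end Admissible

theorem stmt18_general {A : Type*} [Fintype A] [DecidableEq A] [Nonempty A]
    (P : A → Finset A → ℝ) (μQ : Measure ℝ) [IsProbabilityMeasure μQ]
    (hPnn : ∀ a A', 0 ≤ P a A')
    (hPempty : ∀ a, P a (∅ : Finset A) = 0)
    -- Assumption Q1
    (hQ1a : ∀ q : ℝ, q < 0 → Qfun μQ q = 0)
    (hQ1b : ∀ q : ℝ, 0 < q → 0 < Qfun μQ q)
    -- Assumption A1-i
    (hA1i : ∀ a b : A, b ≠ a →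
      0 < ∑ A' ∈ (Finset.univ.erase a).powerset.filter (fun A' => b ∈ A'), P a A')
    (x : A → ℝ) (hx : x ∈ stdSimplex ℝ A) (π : A → ℝ) :
    (∀ Δx ∈ Vset P μQ x π, 0 ≤ ∑ b : A, Δx b * π b) ∧
    ((∀ a : A, 0 < x a → π a = Finset.univ.sup' Finset.univ_nonempty π) →
      ∀ Δx ∈ Vset P μQ x π, ∑ b : A, Δx b * π b = 0) ∧
    ((∃ a : A, 0 < x a ∧ π a < Finset.univ.sup' Finset.univ_nonempty π) →
      ∀ Δx ∈ Vset P μQ x π, 0 < ∑ b : A, Δx b * π b) := by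
  have hx₀ : ∀ a, 0 ≤ x a := hx.1
  have hdot_nonneg : ∀ a z, IsAdmissible P μQ π a z → 0 ≤ ∑ b, z b * π b :=
    fun a _ hz => hz.sum_mul_nonneg (hPnn a) (hPempty a) hQ1a
  refine ⟨fun Δx hΔx => ?_, fun hopt Δx hΔx => ?_, fun ⟨a, hxa, ha⟩ Δx hΔx => ?_⟩ <;>
    obtain ⟨z, hz, hsum⟩ := exists_sum_mul_eq_of_mem_Vset hΔx <;> rw [hsum]
  · exact sum_nonneg fun a _ => mul_nonneg (hx₀ a) (hdot_nonneg a _ (hz a))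
  · refine sum_eq_zero fun a _ => ?_
    rcases (hx₀ a).eq_or_lt with hxa | hxa
    · rw [← hxa, zero_mul]
    · rw [le_antisymm ((hz a).sum_mul_nonpos_of_eq_sup' (hPnn a) (hPempty a) (hopt a hxa))
        (hdot_nonneg a _ (hz a)), mul_zero]
  · refine sum_pos' (fun c _ => mul_nonneg (hx₀ c) (hdot_nonneg c _ (hz c))) ⟨a, mem_univ a, ?_⟩
    exact mul_pos hxa ((hz a).sum_mul_pos_of_lt_sup' (hPnn a) (hPempty a) hQ1a hQ1b (hA1i a) ha)

/-- Positive correlation: every feasible transition vector satisfies `Δx · π ≥ 0`,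
with `Δx · π = 0` for all `Δx ∈ V(x)[π]` when all used actions are optimal, and
`Δx · π > 0` for all `Δx ∈ V(x)[π]` when some used action is suboptimal. -/
theorem stmt18 {A : Type*} [Fintype A] [DecidableEq A] [Nonempty A]
    (P : A → Finset A → ℝ) (μQ : Measure ℝ) [IsProbabilityMeasure μQ]
    (hPnn : ∀ a A', 0 ≤ P a A')
    (hPsupp : ∀ a A', ¬ A' ⊆ Finset.univ.erase a → P a A' = 0)
    (hPempty : ∀ a, P a (∅ : Finset A) = 0)
    (hPsum : ∀ a, ∑ A' ∈ (Finset.univ.erase a).powerset, P a A' = 1)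
    -- Assumption Q1
    (hQ1a : ∀ q : ℝ, q < 0 → Qfun μQ q = 0)
    (hQ1b : ∀ q : ℝ, 0 < q → 0 < Qfun μQ q)
    -- Assumption A1-i
    (hA1i : ∀ a b : A, b ≠ a →
      0 < ∑ A' ∈ (Finset.univ.erase a).powerset.filter (fun A' => b ∈ A'), P a A')
    (x : A → ℝ) (hx : x ∈ stdSimplex ℝ A) (π : A → ℝ) :
    (∀ Δx ∈ Vset P μQ x π, 0 ≤ ∑ b : A, Δx b * π b) ∧
    ((∀ a : A, 0 < x a → π a = Finset.univ.sup' Finset.univ_nonempty π) →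
      ∀ Δx ∈ Vset P μQ x π, ∑ b : A, Δx b * π b = 0) ∧
    ((∃ a : A, 0 < x a ∧ π a < Finset.univ.sup' Finset.univ_nonempty π) →
      ∀ Δx ∈ Vset P μQ x π, 0 < ∑ b : A, Δx b * π b) :=
  stmt18_general P μQ hPnn hPempty hQ1a hQ1b hA1i x hx π
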